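/- arXiv:0910.1135 — 2 statements merged into one kernel-verified Lean document; each statement's English description precedes it below -/
import Mathlib

section
/- Let n ≥ 2 and k ≥ 1 be integers, let T_max = 1/((k+1) n^k) and r(t) = ((k+1) n^k (T_max - t))^{1/(k+1)} for t ∈ [0, T_max). Then the integral ∫₀^{T_max} (n / r(t))^α · ω_n · r(t)^n dt is finite if and only if α < n + k + 1, where ω_n > 0 is any fixed constant (the area of the unit n-sphere). -/
open Set MeasureTheory

/-- The spacetime `L^α` norm of the mean curvature of the shrinking sphere is
finite iff `α < n + k + 1`. -/
theorem stmt_2 (n k : ℕ) (hn : 2 ≤ n) (hk : 1 ≤ k) (α ω : ℝ) (hω : 0 < ω)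
    (Tmax : ℝ) (hT : Tmax = 1 / (((k : ℝ) + 1) * (n : ℝ) ^ k))
    (r : ℝ → ℝ)
    (hr : ∀ t : ℝ, r t =
      (((k : ℝ) + 1) * (n : ℝ) ^ k * (Tmax - t)) ^ ((1 : ℝ) / ((k : ℝ) + 1))) :
    IntegrableOn (fun t : ℝ => ((n : ℝ) / r t) ^ α * ω * (r t) ^ (n : ℝ))
      (Ico (0 : ℝ) Tmax) ↔ α < (n : ℝ) + k + 1 := by
  have hnpos : (0 : ℝ) < n := by positivity
  have hk1 : (0 : ℝ) < (k : ℝ) + 1 := by positivity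
  set c : ℝ := ((k : ℝ) + 1) * (n : ℝ) ^ k with hc
  have hcpos : 0 < c := by positivity
  have hTpos : 0 < Tmax := by rw [hT]; positivity
  set p : ℝ := ((n : ℝ) - α) / ((k : ℝ) + 1) with hp
  set C : ℝ := (n : ℝ) ^ α * ω * c ^ p with hC
  have hCpos : 0 < C := by
    have := Real.rpow_pos_of_pos hnpos α
    have := Real.rpow_pos_of_pos hcpos p
    positivity
  -- the integrand equals C * (Tmax - t) ^ p on Ico 0 Tmax
  have heq : EqOn (fun t : ℝ => ((n : ℝ) / r t) ^ α * ω * (r t) ^ (n : ℝ))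
      (fun t : ℝ => C * (Tmax - t) ^ p) (Ico (0 : ℝ) Tmax) := by
    intro t ht
    have hst : 0 < Tmax - t := sub_pos.2 ht.2
    have hxpos : 0 < c * (Tmax - t) := mul_pos hcpos hst
    have hrt : r t = (c * (Tmax - t)) ^ ((1 : ℝ) / ((k : ℝ) + 1)) := hr t
    have hrpos : 0 < r t := by rw [hrt]; exact Real.rpow_pos_of_pos hxpos _
    simp only
    rw [Real.div_rpow hnpos.le hrpos.le]
    have hep : (1 / ((k : ℝ) + 1)) * ((n : ℝ) - α) = p := by rw [hp]; ring
    have key : (r t) ^ ((n : ℝ) - α) = c ^ p * (Tmax - t) ^ p := by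
      rw [hrt, ← Real.rpow_mul hxpos.le, hep, Real.mul_rpow hcpos.le hst.le]
    have hdiv : (r t) ^ (n : ℝ) / (r t) ^ α = c ^ p * (Tmax - t) ^ p := by
      rw [← Real.rpow_sub hrpos]; exact key
    calc (n : ℝ) ^ α / (r t) ^ α * ω * (r t) ^ (n : ℝ)
        = (n : ℝ) ^ α * ω * ((r t) ^ (n : ℝ) / (r t) ^ α) := by ring
      _ = C * (Tmax - t) ^ p := by rw [hdiv, hC]; ring
  rw [IntegrableOn, integrable_congr (ae_restrict_of_forall_mem measurableSet_Ico heq)]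
  have hCunit : IsUnit C := isUnit_iff_ne_zero.2 hCpos.ne'
  rw [show (fun t : ℝ => C * (Tmax - t) ^ p) = (fun t : ℝ => C * ((fun s : ℝ => (Tmax - s) ^ p) t)) from rfl]
  rw [← IntegrableOn, IntegrableOn, integrable_const_mul_iff hCunit, ← IntegrableOn]
  rw [integrableOn_Ico_iff_integrableOn_Ioo]
  have hrefl : IntegrableOn (fun s : ℝ => (Tmax - s) ^ p) (Ioo 0 Tmax)
      ↔ IntegrableOn (fun s : ℝ => s ^ p) (Ioo 0 Tmax) := by
    rw [← intervalIntegrable_iff_integrableOn_Ioo_of_le hTpos.le,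
      ← intervalIntegrable_iff_integrableOn_Ioo_of_le hTpos.le]
    constructor
    · intro h
      have := (h.comp_sub_left Tmax).symm
      simpa using this
    · intro h
      have := (h.comp_sub_left Tmax).symm
      simpa using this
  rw [hrefl, intervalIntegral.integrableOn_Ioo_rpow_iff hTpos, hp, lt_div_iff₀ hk1]
  constructor <;> intro h <;> nlinarith
end

section
/- Let n ≥ 2 and k ≥ 2 be integers, M a compact n-dimensional hypersurface in ℝ^{n+1}, Q_k = kn/(kn-(k+1)), and suppose that for every nonnegative Lipschitz v: ||v||_{L^{((k+1)/k)Q_k}(M)}^{k+1} ≤ A_{n,k}( ||∇v||_{L^{(k+1)/k}(M)}^{k+1} + ||H||_{L^{n+k+1}(M)}^{n+k+1} ||v||_{L^{(k+1)/k}(M)}^{k+1} ). Then for every nonnegative Lipschitz v, ||v||_{L^{2Q_k}(M)}² ≤ Ã_{n,k}( ||v||_{L²(M)}^{(k-1)/k} · ||∇v||_{L²(M)}^{(k+1)/k} + (||H||_{L^{n+k+1}(M)}^{n+k+1})^{1/k} ||v||_{L²(M)}² ), where Ã_{n,k} = A_{n,k}^{1/k} · (2k/(k+1))^{(k+1)/k}.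 -/
/-!
Put `t = 2k/(k+1)`. Applied to `v ^ t`, the hypothesis has left side `‖v‖_{2Q}^{2k}`, last
term `‖H‖^{n+k+1} ‖v‖_2^{2k}`, and, by the chain rule, gradient term
`t^{k+1} ‖v^{t-1} |∇v|‖_{(k+1)/k}^{k+1}`.
Hölder's inequality with `k/(k+1) = (k-1)/(2(k+1)) + 1/2` bounds the last norm by
`‖v‖_2^{t-1} ‖∇v‖_2`, and taking `k`-th roots, with `(a+b)^{1/k} ≤ a^{1/k} + b^{1/k}`,
gives the claim.

Since integrals of non-integrable functions are `0`, Hölder's inequality needs integrability,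
which comes from the hypothesis itself: on indicator functions, whose gradient vanishes, it reads
`μ(E)^{k/Q} ≤ A ‖H‖^{n+k+1} μ(E)^k`, so sets of small measure are null and every measurable
function is essentially bounded.
-/

open MeasureTheory Filter
open scoped ENNReal

section Holder

variable {α : Type*} [MeasurableSpace α] {μ : Measure α}

theorem integral_rpow_mul_rpow_le {f g : α → ℝ} (hf : 0 ≤ f) (hg : 0 ≤ g)
    (hfi : Integrable f μ) (hgi : Integrable g μ) {a b : ℝ} (ha : 0 < a) (hb : 0 < b)
    (hab : a + b = 1) :
    ∫ x, f x ^ a * g x ^ b ∂μ ≤ (∫ x, f x ∂μ) ^ a * (∫ x, g x ∂μ) ^ b := by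
  have hconj : (1 / a).HolderConjugate (1 / b) :=
    Real.holderConjugate_iff.mpr ⟨by rw [lt_one_div one_pos ha]; linarith, by simp [hab]⟩
  have memLp_rpow : ∀ {u : α → ℝ} {c : ℝ}, 0 ≤ u → Integrable u μ → 0 < c →
      MemLp (fun x => u x ^ c) (ENNReal.ofReal (1 / c)) μ := by
    intro u c hu hui hc
    have h := (memLp_one_iff_integrable.mpr hui).norm_rpow_div (ENNReal.ofReal c)
    rw [ENNReal.toReal_ofReal hc.le, ← ENNReal.ofReal_one, ← ENNReal.ofReal_div_of_pos hc] at h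
    simpa only [Real.norm_of_nonneg (hu _)] using h
  have h := integral_mul_le_Lp_mul_Lq_of_nonneg hconj
    (Eventually.of_forall fun x => Real.rpow_nonneg (hf x) a)
    (Eventually.of_forall fun x => Real.rpow_nonneg (hg x) b)
    (memLp_rpow hf hfi ha) (memLp_rpow hg hgi hb)
  simpa only [← Real.rpow_mul (hf _), ← Real.rpow_mul (hg _), mul_one_div_cancel ha.ne',
    mul_one_div_cancel hb.ne', Real.rpow_one, one_div_one_div] using h

end Holder

/-- For `f ≥ 0` this is `‖f‖_{L^p(μ)}`, except that it is `0` when `f ^ p` is not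
integrable. -/
noncomputable def rpowNorm {α : Type*} [MeasurableSpace α] (μ : Measure α) (p : ℝ)
    (f : α → ℝ) : ℝ :=
  (∫ x, f x ^ p ∂μ) ^ (1 / p)

namespace rpowNorm

variable {α : Type*} [MeasurableSpace α] {μ : Measure α} {p : ℝ} {f g : α → ℝ}

theorem nonneg (hf : 0 ≤ f) : 0 ≤ rpowNorm μ p f :=
  Real.rpow_nonneg (integral_nonneg fun x => Real.rpow_nonneg (hf x) p) _

theorem zero (hp : p ≠ 0) : rpowNorm μ p 0 = 0 := by
  simp [rpowNorm, Real.zero_rpow hp, hp]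

theorem rpow (hf : 0 ≤ f) (hp : p ≠ 0) {t : ℝ} (ht : t ≠ 0) :
    rpowNorm μ p (fun x => f x ^ t) = rpowNorm μ (t * p) f ^ t := by
  simp only [rpowNorm, ← Real.rpow_mul (hf _)]
  rw [← Real.rpow_mul (integral_nonneg fun x => Real.rpow_nonneg (hf x) _)]
  congr 1
  field_simp

theorem const_mul (hf : 0 ≤ f) (hp : p ≠ 0) {c : ℝ} (hc : 0 ≤ c) :
    rpowNorm μ p (fun x => c * f x) = c * rpowNorm μ p f := by
  simp only [rpowNorm, Real.mul_rpow hc (hf _), integral_const_mul]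
  rw [Real.mul_rpow (Real.rpow_nonneg hc p)
      (integral_nonneg fun x => Real.rpow_nonneg (hf x) p),
    ← Real.rpow_mul hc, mul_one_div_cancel hp, Real.rpow_one]

theorem indicator_one {E : Set α} (hE : MeasurableSet E) (hp : 0 < p) :
    rpowNorm μ p (E.indicator 1) = μ.real E ^ (1 / p) := by
  have h : (fun x => E.indicator (1 : α → ℝ) x ^ p) = E.indicator 1 := by
    funext x
    by_cases hx : x ∈ E <;> simp [hx, Real.zero_rpow hp.ne']
  rw [rpowNorm, h, integral_indicator_one hE]

theorem mul_le (hf : 0 ≤ f) (hg : 0 ≤ g) {r s : ℝ} (hp : 0 < p) (hr : 0 < r) (hs : 0 < s)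
    (hprs : 1 / p = 1 / r + 1 / s) (hfi : Integrable (fun x => f x ^ r) μ)
    (hgi : Integrable (fun x => g x ^ s) μ) :
    rpowNorm μ p (fun x => f x * g x) ≤ rpowNorm μ r f * rpowNorm μ s g := by
  have hab : p / r + p / s = 1 := by
    field_simp at hprs ⊢; linarith
  have h := integral_rpow_mul_rpow_le (fun x => Real.rpow_nonneg (hf x) r)
    (fun x => Real.rpow_nonneg (hg x) s) hfi hgi (div_pos hp hr) (div_pos hp hs) hab
  simp only [← Real.rpow_mul (hf _), ← Real.rpow_mul (hg _), mul_div_cancel₀ _ hr.ne',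
    mul_div_cancel₀ _ hs.ne', ← Real.mul_rpow (hf _) (hg _)] at h
  have hF : 0 ≤ ∫ x, f x ^ r ∂μ := integral_nonneg fun x => Real.rpow_nonneg (hf x) r
  have hG : 0 ≤ ∫ x, g x ^ s ∂μ := integral_nonneg fun x => Real.rpow_nonneg (hg x) s
  calc rpowNorm μ p (fun x => f x * g x)
      ≤ ((∫ x, f x ^ r ∂μ) ^ (p / r) * (∫ x, g x ^ s ∂μ) ^ (p / s)) ^ (1 / p) :=
        Real.rpow_le_rpow (integral_nonneg fun x => Real.rpow_nonneg
          (mul_nonneg (hf x) (hg x)) p) h (by positivity)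
    _ = rpowNorm μ r f * rpowNorm μ s g := by
        rw [Real.mul_rpow (Real.rpow_nonneg hF _) (Real.rpow_nonneg hG _),
          ← Real.rpow_mul hF, ← Real.rpow_mul hG, rpowNorm, rpowNorm]
        congr 2 <;> field_simp

end rpowNorm

section SmallSets

variable {α : Type*} [MeasurableSpace α] {μ : Measure α} [IsFiniteMeasure μ]

theorem exists_forall_measure_lt_eq_zero_of_rpow_le {a b C : ℝ} (hab : a < b) (hC : 0 ≤ C)
    (h : ∀ E, MeasurableSet E → μ.real E ^ a ≤ C * μ.real E ^ b) :
    ∃ δ : ℝ≥0∞, 0 < δ ∧ ∀ E, MeasurableSet E → μ E < δ → μ E = 0 := by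
  -- `d ^ (b - a) = 1 / (C + 1)`, and `h E` fails when `0 < μ E < d`.
  set d := (C + 1) ^ (-(b - a)⁻¹)
  have hd : 0 < d := by positivity
  refine ⟨ENNReal.ofReal d, ENNReal.ofReal_pos.mpr hd, fun E hE hlt => ?_⟩
  by_contra hne
  have hm : 0 < μ.real E := ENNReal.toReal_pos hne (measure_ne_top μ E)
  have hmd : μ.real E < d := ENNReal.toReal_lt_of_lt_ofReal hlt
  have hsmall : (C + 1) * μ.real E ^ (b - a) < 1 := by
    have h1 := Real.rpow_lt_rpow hm.le hmd (sub_pos.mpr hab)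
    rw [← Real.rpow_mul (by positivity), neg_mul, inv_mul_cancel₀ (sub_pos.mpr hab).ne',
      Real.rpow_neg_one] at h1
    have h2 := mul_lt_mul_of_pos_left h1 (by positivity : 0 < C + 1)
    rwa [mul_inv_cancel₀ (by positivity)] at h2
  have hlarge : μ.real E ^ a ≤ C * μ.real E ^ (b - a) * μ.real E ^ a := by
    rw [mul_assoc, ← Real.rpow_add hm, sub_add_cancel]
    exact h E hE
  have hpos := Real.rpow_pos_of_pos hm a
  nlinarith [Real.rpow_nonneg hm.le (b - a)]

theorem integrable_of_forall_measure_lt_eq_zero {E : Type*} [NormedAddCommGroup E]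
    {δ : ℝ≥0∞} (hδ : 0 < δ) (h : ∀ s, MeasurableSet s → μ s < δ → μ s = 0)
    {f : α → E} (hf : AEStronglyMeasurable f μ) : Integrable f μ := by
  set s : ℕ → Set α := fun j => {x | (j : ℝ) ≤ ‖hf.mk f x‖}
  have hs : ∀ j, MeasurableSet (s j) := fun j =>
    measurableSet_le measurable_const hf.stronglyMeasurable_mk.norm.measurable
  have hanti : Antitone s := fun i j hij x (hx : (j : ℝ) ≤ _) =>
    (Nat.cast_le.mpr hij).trans hx
  have hempty : ⋂ j, s j = ∅ := by
    refine Set.eq_empty_of_forall_notMem fun x hx => ?_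
    obtain ⟨j, hj⟩ := exists_nat_gt ‖hf.mk f x‖
    exact (Set.mem_iInter.mp hx j).not_gt hj
  have hlim := tendsto_measure_iInter_atTop (fun j => (hs j).nullMeasurableSet) hanti
    ⟨0, measure_ne_top μ _⟩
  rw [hempty, measure_empty] at hlim
  obtain ⟨j, hj⟩ := (hlim.eventually_lt_const hδ).exists
  refine Integrable.of_bound hf j ?_
  have hnull : ∀ᵐ x ∂μ, x ∉ s j := measure_eq_zero_iff_ae_notMem.mp (h _ (hs j) hj)
  filter_upwards [hnull, hf.ae_eq_mk] with x hx hfx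
  rw [hfx]
  exact (not_le.mp hx).le

end SmallSets

section Gradient

variable {α : Type*} {G : (α → ℝ) → (α → ℝ)}

theorem grad_eq_zero_of_eq_zero
    (hG : ∀ v : α → ℝ, (∀ x, 0 ≤ v x) →
      G (fun x => v x ^ (2 : ℝ)) = fun x => 2 * v x ^ ((2 : ℝ) - 1) * G v x)
    {v : α → ℝ} (hv : 0 ≤ v) {x : α} (hx : v x = 0) : G v x = 0 := by
  have hsq : (fun x => (v x ^ (2 : ℝ)⁻¹) ^ (2 : ℝ)) = v := funext fun x => by
    rw [← Real.rpow_mul (hv x), inv_mul_cancel₀ two_ne_zero, Real.rpow_one]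
  have h := congrFun (hG _ fun x => Real.rpow_nonneg (hv x) (2 : ℝ)⁻¹) x
  rw [hsq] at h
  rw [h, hx]
  norm_num

theorem grad_indicator_one
    (hG : ∀ v : α → ℝ, (∀ x, 0 ≤ v x) →
      G (fun x => v x ^ (2 : ℝ)) = fun x => 2 * v x ^ ((2 : ℝ) - 1) * G v x)
    (E : Set α) : G (E.indicator 1) = 0 := by
  have hE : 0 ≤ E.indicator (1 : α → ℝ) := Set.indicator_nonneg fun _ _ => zero_le_one
  have hsq : (fun x => E.indicator (1 : α → ℝ) x ^ (2 : ℝ)) = E.indicator 1 :=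
    funext fun x => by by_cases hx : x ∈ E <;> simp [hx]
  funext x
  rw [Pi.zero_apply]
  by_cases hx : x ∈ E
  · have h := congrFun (hG _ hE) x
    rw [hsq] at h
    norm_num [hx] at h
    linarith
  · exact grad_eq_zero_of_eq_zero hG hE (by simp [hx])

end Gradient

section Measurability

variable {α : Type*} [MeasurableSpace α] {μ : Measure α}

theorem aemeasurable_of_rpow_mul_rpow {v g : α → ℝ} (hv : 0 ≤ v) (hg : 0 ≤ g)
    (hvg : ∀ x, v x = 0 → g x = 0) {a b : ℝ} (ha : 0 < a) (hb : 0 < b)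
    (hvm : AEMeasurable v μ) (hm : AEMeasurable (fun x => v x ^ a * g x ^ b) μ) :
    AEMeasurable g μ := by
  have hg_eq : g = fun x => (v x ^ a * g x ^ b) ^ b⁻¹ * v x ^ (-(a / b)) := by
    funext x
    have hvx : 0 ≤ v x := hv x
    rcases hvx.eq_or_lt with h0 | hpos
    · rw [hvg x h0.symm, ← h0, Real.zero_rpow ha.ne', zero_mul,
        Real.zero_rpow (inv_ne_zero hb.ne'), zero_mul]
    · rw [Real.mul_rpow (Real.rpow_nonneg (hv x) a) (Real.rpow_nonneg (hg x) b),
        ← Real.rpow_mul (hv x), ← Real.rpow_mul (hg x), mul_inv_cancel₀ hb.ne', Real.rpow_one,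
        mul_right_comm, ← Real.rpow_add hpos, ← div_eq_mul_inv, add_neg_cancel, Real.rpow_zero,
        one_mul]
  rw [hg_eq]
  exact (hm.pow_const _).mul (hvm.pow_const _)

/-- Only `v` is assumed measurable: that of `g` is recovered from the product, unless the left
side is the junk value `0`. -/
theorem rpowNorm_rpow_mul_le (hint : ∀ f : α → ℝ, AEMeasurable f μ → Integrable f μ)
    {v g : α → ℝ} (hv : 0 ≤ v) (hg : 0 ≤ g) (hvg : ∀ x, v x = 0 → g x = 0)
    (hvm : AEMeasurable v μ) {a p r s : ℝ} (ha : 0 < a) (hp : 0 < p) (hr : 0 < r) (hs : 0 < s)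
    (hprs : 1 / p = 1 / r + 1 / s) :
    rpowNorm μ p (fun x => v x ^ a * g x) ≤
      rpowNorm μ r (fun x => v x ^ a) * rpowNorm μ s g := by
  have hva : 0 ≤ fun x => v x ^ a := fun x => Real.rpow_nonneg (hv x) a
  by_cases hi : Integrable (fun x => (v x ^ a * g x) ^ p) μ
  · have hprod : AEMeasurable (fun x => v x ^ (a * p) * g x ^ p) μ := by
      simpa only [Real.mul_rpow (Real.rpow_nonneg (hv _) _) (hg _), ← Real.rpow_mul (hv _)]
        using hi.aemeasurable
    have hgm := aemeasurable_of_rpow_mul_rpow hv hg hvg (mul_pos ha hp) hp hvm hprod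
    exact rpowNorm.mul_le hva hg hp hr hs hprs (hint _ ((hvm.pow_const a).pow_const r))
      (hint _ (hgm.pow_const s))
  · calc rpowNorm μ p (fun x => v x ^ a * g x) = 0 := by
          rw [rpowNorm, integral_undef hi, Real.zero_rpow (one_div_pos.mpr hp).ne']
      _ ≤ _ := mul_nonneg (rpowNorm.nonneg hva) (rpowNorm.nonneg hg)

end Measurability

theorem rpow_one_div_le_mul_add {k A X B C : ℝ} (hk : 1 ≤ k) (hA : 0 ≤ A) (hX : 0 ≤ X)
    (hB : 0 ≤ B) (hC : 0 ≤ C) (h : X ≤ A * (B ^ k + C ^ k)) :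
    X ^ (1 / k) ≤ A ^ (1 / k) * (B + C) := by
  have hk0 : 0 < k := by linarith
  have hkth : ∀ {u : ℝ}, 0 ≤ u → (u ^ k) ^ (1 / k) = u := fun hu => by
    rw [← Real.rpow_mul hu, mul_one_div_cancel hk0.ne', Real.rpow_one]
  calc X ^ (1 / k) ≤ (A * (B ^ k + C ^ k)) ^ (1 / k) := by gcongr
    _ = A ^ (1 / k) * (B ^ k + C ^ k) ^ (1 / k) := Real.mul_rpow hA (by positivity)
    _ ≤ A ^ (1 / k) * ((B ^ k) ^ (1 / k) + (C ^ k) ^ (1 / k)) := by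
        gcongr
        exact Real.rpow_add_le_add_rpow (by positivity) (by positivity) (by positivity)
          ((div_le_one hk0).mpr hk)
    _ = A ^ (1 / k) * (B + C) := by rw [hkth hB, hkth hC]

theorem rpow_two_le_of_rpow_le {k A P t x y z : ℝ} (hk : 1 ≤ k) (ht : t = 2 * k / (k + 1))
    (hA : 0 ≤ A) (hP : 0 ≤ P) (hx : 0 ≤ x) (hy : 0 ≤ y) (hz : 0 ≤ z)
    (h : (x ^ t) ^ (k + 1) ≤ A * ((t * (y ^ (t - 1) * z)) ^ (k + 1) + P * (y ^ t) ^ (k + 1))) :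
    x ^ (2 : ℝ) ≤
      A ^ (1 / k) * t ^ ((k + 1) / k) *
        (y ^ ((k - 1) / k) * z ^ ((k + 1) / k) + P ^ (1 / k) * y ^ (2 : ℝ)) := by
  have hk0 : 0 < k := by linarith
  have ht0 : 0 ≤ t := by rw [ht]; positivity
  have ht1 : 1 ≤ t := by rw [ht, le_div_iff₀ (by linarith)]; linarith
  set T := t ^ ((k + 1) / k)
  set Y := y ^ ((k - 1) / k) * z ^ ((k + 1) / k)
  set C := P ^ (1 / k) * y ^ (2 : ℝ)
  have hL : (x ^ t) ^ (k + 1) = (x ^ (2 : ℝ)) ^ k := by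
    rw [← Real.rpow_mul hx, ← Real.rpow_mul hx, ht]
    congr 1
    field_simp
  have hR1 : (t * (y ^ (t - 1) * z)) ^ (k + 1) = (T * Y) ^ k := by
    rw [Real.mul_rpow ht0 (by positivity), Real.mul_rpow (by positivity) hz,
      Real.mul_rpow (by positivity) (by positivity), Real.mul_rpow (by positivity) (by positivity),
      ← Real.rpow_mul hy, ← Real.rpow_mul ht0, ← Real.rpow_mul hz, ← Real.rpow_mul hy,
      div_mul_cancel₀ _ hk0.ne', div_mul_cancel₀ _ hk0.ne']
    congr 3
    rw [ht]
    field_simp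
    ring
  have hR2 : P * (y ^ t) ^ (k + 1) = C ^ k := by
    rw [Real.mul_rpow (by positivity) (by positivity), ← Real.rpow_mul hP, ← Real.rpow_mul hy,
      ← Real.rpow_mul hy, one_div_mul_cancel hk0.ne', Real.rpow_one, ht]
    congr 2
    field_simp
  rw [hL, hR1, hR2] at h
  have hT : 1 ≤ T := Real.one_le_rpow ht1 (by positivity)
  have hY : 0 ≤ Y := by positivity
  have hC : 0 ≤ C := by positivity
  calc x ^ (2 : ℝ) = ((x ^ (2 : ℝ)) ^ k) ^ (1 / k) := by
        rw [← Real.rpow_mul (by positivity), mul_one_div_cancel hk0.ne', Real.rpow_one]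
    _ ≤ A ^ (1 / k) * (T * Y + C) :=
        rpow_one_div_le_mul_add hk hA (by positivity) (by positivity) hC h
    _ ≤ A ^ (1 / k) * T * (Y + C) := by
        rw [mul_assoc]
        gcongr
        nlinarith

def SobolevInequality {α : Type*} [MeasurableSpace α] (μ : Measure α)
    (G : (α → ℝ) → (α → ℝ)) (p q m B K : ℝ) : Prop :=
  ∀ v : α → ℝ, (∀ x, 0 ≤ v x) →
    rpowNorm μ p v ^ m ≤ B * (rpowNorm μ q (G v) ^ m + K * rpowNorm μ q v ^ m)

section Sobolev

variable {α : Type*} [MeasurableSpace α] {μ : Measure α} {G : (α → ℝ) → (α → ℝ)}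

theorem SobolevInequality.exists_forall_measure_lt_eq_zero [IsFiniteMeasure μ]
    {p q m B K : ℝ} (h : SobolevInequality μ G p q m B K)
    (hG : ∀ v : α → ℝ, (∀ x, 0 ≤ v x) →
      G (fun x => v x ^ (2 : ℝ)) = fun x => 2 * v x ^ ((2 : ℝ) - 1) * G v x)
    (hq : 0 < q) (hqp : q < p) (hm : 0 < m) (hB : 0 ≤ B) (hK : 0 ≤ K) :
    ∃ δ : ℝ≥0∞, 0 < δ ∧ ∀ E, MeasurableSet E → μ E < δ → μ E = 0 := by
  refine exists_forall_measure_lt_eq_zero_of_rpow_le (a := m / p) (b := m / q) (C := B * K)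
    (div_lt_div_of_pos_left hm hq hqp) (mul_nonneg hB hK) fun E hE => ?_
  have h := h (E.indicator 1) (Set.indicator_nonneg fun _ _ => zero_le_one)
  rw [grad_indicator_one hG, rpowNorm.zero hq.ne', Real.zero_rpow hm.ne', zero_add,
    rpowNorm.indicator_one hE hq, rpowNorm.indicator_one hE (hq.trans hqp),
    ← Real.rpow_mul measureReal_nonneg, ← Real.rpow_mul measureReal_nonneg] at h
  simpa only [one_div_mul_eq_div, mul_assoc] using h

variable {k Q A P t : ℝ}

theorem SobolevInequality.rpow_substitution
    (h : SobolevInequality μ G ((k + 1) / k * Q) ((k + 1) / k) (k + 1) A P)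
    (hk : 1 < k) (hQ : 0 < Q) (ht : t = 2 * k / (k + 1)) {v : α → ℝ} (hv : 0 ≤ v)
    (hGt : G (fun x => v x ^ t) = fun x => t * v x ^ (t - 1) * G v x) (hGv : 0 ≤ G v) :
    (rpowNorm μ (2 * Q) v ^ t) ^ (k + 1) ≤
      A * ((t * rpowNorm μ ((k + 1) / k) (fun x => v x ^ (t - 1) * G v x)) ^ (k + 1) +
        P * (rpowNorm μ 2 v ^ t) ^ (k + 1)) := by
  have hk0 : 0 < k := by linarith
  have ht0 : 0 < t := by rw [ht]; positivity
  have htc : t * ((k + 1) / k) = 2 := by rw [ht]; field_simp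
  have key := h _ fun x => Real.rpow_nonneg (hv x) t
  rw [hGt, rpowNorm.rpow hv (by positivity) ht0.ne', rpowNorm.rpow hv (by positivity) ht0.ne',
    ← mul_assoc, htc] at key
  simp only [mul_assoc t] at key
  rwa [rpowNorm.const_mul (fun x => mul_nonneg (Real.rpow_nonneg (hv x) _) (hGv x))
    (by positivity) ht0.le] at key

theorem SobolevInequality.rpowNorm_rpow_mul_grad_le [IsFiniteMeasure μ]
    (h : SobolevInequality μ G ((k + 1) / k * Q) ((k + 1) / k) (k + 1) A P)
    (hG : ∀ v : α → ℝ, (∀ x, 0 ≤ v x) →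
      G (fun x => v x ^ (2 : ℝ)) = fun x => 2 * v x ^ ((2 : ℝ) - 1) * G v x)
    (hk : 1 < k) (hQ : 1 < Q) (hA : 0 ≤ A) (hP : 0 ≤ P) (ht : t = 2 * k / (k + 1))
    {v : α → ℝ} (hv : 0 ≤ v) (hvm : AEMeasurable v μ) (hGv : 0 ≤ G v) :
    rpowNorm μ ((k + 1) / k) (fun x => v x ^ (t - 1) * G v x) ≤
      rpowNorm μ 2 v ^ (t - 1) * rpowNorm μ 2 (G v) := by
  have hc : 0 < (k + 1) / k := by positivity
  have ht1 : 0 < t - 1 := by rw [ht, sub_pos, lt_div_iff₀ (by linarith)]; linarith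
  obtain ⟨δ, hδ, hnull⟩ := h.exists_forall_measure_lt_eq_zero hG hc
    (lt_mul_of_one_lt_right hc hQ) (by linarith) hA hP
  have hint : ∀ f : α → ℝ, AEMeasurable f μ → Integrable f μ := fun f hf =>
    integrable_of_forall_measure_lt_eq_zero hδ hnull hf.aestronglyMeasurable
  -- Hölder with `1 / ((k + 1) / k) = 1 / (2 / (t - 1)) + 1 / 2`.
  have hholder := rpowNorm_rpow_mul_le hint hv hGv (fun x => grad_eq_zero_of_eq_zero hG hv)
    hvm ht1 hc (div_pos two_pos ht1) two_pos (by rw [ht]; field_simp; ring)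
  rwa [rpowNorm.rpow hv (by positivity) ht1.ne', mul_div_cancel₀ _ ht1.ne'] at hholder

theorem SobolevInequality.rpowNorm_sq_le [IsFiniteMeasure μ]
    (h : SobolevInequality μ G ((k + 1) / k * Q) ((k + 1) / k) (k + 1) A P)
    (hGpos : ∀ v x, 0 ≤ G v x)
    (hGchain : ∀ v : α → ℝ, (∀ x, 0 ≤ v x) → ∀ a : ℝ, 1 ≤ a →
      G (fun x => v x ^ a) = fun x => a * v x ^ (a - 1) * G v x)
    (hk : 1 < k) (hQ : 1 < Q) (hA : 0 ≤ A) (hP : 0 ≤ P) {v : α → ℝ} (hv : 0 ≤ v) :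
    rpowNorm μ (2 * Q) v ^ (2 : ℝ) ≤
      A ^ (1 / k) * (2 * k / (k + 1)) ^ ((k + 1) / k) *
        (rpowNorm μ 2 v ^ ((k - 1) / k) * rpowNorm μ 2 (G v) ^ ((k + 1) / k) +
          P ^ (1 / k) * rpowNorm μ 2 v ^ (2 : ℝ)) := by
  set t := 2 * k / (k + 1) with ht
  have ht1 : 1 ≤ t := by rw [ht, le_div_iff₀ (by linarith)]; linarith
  have hy : 0 ≤ rpowNorm μ 2 v := rpowNorm.nonneg hv
  have hz : 0 ≤ rpowNorm μ 2 (G v) := rpowNorm.nonneg (hGpos v)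
  refine rpow_two_le_of_rpow_le hk.le ht hA hP (rpowNorm.nonneg hv) hy hz ?_
  rcases eq_or_ne (∫ x, v x ^ (2 * Q) ∂μ) 0 with hS | hS
  · have hx : rpowNorm μ (2 * Q) v = 0 := by
      rw [rpowNorm, hS, Real.zero_rpow (by positivity)]
    rw [hx, Real.zero_rpow (by positivity), Real.zero_rpow (by positivity)]
    positivity
  have hvm : AEMeasurable v μ :=
    ((Integrable.of_integral_ne_zero hS).aemeasurable.pow_const (2 * Q)⁻¹).congr
      (Eventually.of_forall fun x => Real.rpow_rpow_inv (hv x) (by positivity))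
  have hgrad := h.rpowNorm_rpow_mul_grad_le (fun w hw => hGchain w hw 2 one_le_two) hk hQ hA hP
    ht hv hvm (hGpos v)
  have hgrad0 : 0 ≤ rpowNorm μ ((k + 1) / k) (fun x => v x ^ (t - 1) * G v x) :=
    rpowNorm.nonneg fun x => mul_nonneg (Real.rpow_nonneg (hv x) _) (hGpos v x)
  refine (h.rpow_substitution hk (by linarith) ht hv (hGchain v hv t ht1) (hGpos v)).trans ?_
  gcongr

end Sobolev

/-- `L²` form of the nonlinear Michael–Simon inequality.  The geometry is
abstracted as in the previous statement: `μ` is the volume measure, `H` the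
mean curvature, and `G v = |∇v|` a nonnegative gradient-norm operator obeying
the chain rule for powers.  With `Q_k = kn/(kn-(k+1))`, if for every
nonnegative `v` one has
`‖v‖_{L^{((k+1)/k)Q_k}}^{k+1} ≤ A(‖∇v‖_{L^{(k+1)/k}}^{k+1} + ‖H‖_{L^{n+k+1}}^{n+k+1} ‖v‖_{L^{(k+1)/k}}^{k+1})`,
then for every nonnegative `v`:
`‖v‖_{L^{2Q_k}}² ≤ Ã(‖v‖_{L²}^{(k-1)/k} ‖∇v‖_{L²}^{(k+1)/k} + (‖H‖_{L^{n+k+1}}^{n+k+1})^{1/k} ‖v‖_{L²}²)`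
with `Ã = A^{1/k} (2k/(k+1))^{(k+1)/k}`. -/
theorem stmt_15 {M : Type*} [MeasurableSpace M] (μ : Measure M) [IsFiniteMeasure μ]
    (n k : ℕ) (hn : 2 ≤ n) (hk : 2 ≤ k)
    (H : M → ℝ) (G : (M → ℝ) → (M → ℝ)) (A : ℝ) (hA : 0 < A)
    (hGpos : ∀ v x, 0 ≤ G v x)
    (hGchain : ∀ v : M → ℝ, (∀ x, 0 ≤ v x) → ∀ a : ℝ, 1 ≤ a →
      G (fun x => v x ^ a) = fun x => a * v x ^ (a - 1) * G v x)
    (hyp : ∀ v : M → ℝ, (∀ x, 0 ≤ v x) →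
      ((∫ x, v x ^ ((((k : ℝ) + 1) / k) * (((k : ℝ) * n) / ((k : ℝ) * n - ((k : ℝ) + 1)))) ∂μ) ^
          (1 / ((((k : ℝ) + 1) / k) * (((k : ℝ) * n) / ((k : ℝ) * n - ((k : ℝ) + 1)))))) ^ ((k : ℝ) + 1) ≤
        A * (((∫ x, (G v x) ^ (((k : ℝ) + 1) / k) ∂μ) ^ (1 / (((k : ℝ) + 1) / k))) ^ ((k : ℝ) + 1) +
          (∫ x, |H x| ^ ((n : ℝ) + k + 1) ∂μ) *
            ((∫ x, v x ^ (((k : ℝ) + 1) / k) ∂μ) ^ (1 / (((k : ℝ) + 1) / k))) ^ ((k : ℝ) + 1))) :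
    ∀ v : M → ℝ, (∀ x, 0 ≤ v x) →
      ((∫ x, v x ^ (2 * (((k : ℝ) * n) / ((k : ℝ) * n - ((k : ℝ) + 1)))) ∂μ) ^
          (1 / (2 * (((k : ℝ) * n) / ((k : ℝ) * n - ((k : ℝ) + 1)))))) ^ (2 : ℝ) ≤
        (A ^ ((1 : ℝ) / k) * (2 * (k : ℝ) / ((k : ℝ) + 1)) ^ (((k : ℝ) + 1) / k)) *
          (((∫ x, v x ^ (2 : ℝ) ∂μ) ^ ((1 : ℝ) / 2)) ^ (((k : ℝ) - 1) / k) *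
              ((∫ x, (G v x) ^ (2 : ℝ) ∂μ) ^ ((1 : ℝ) / 2)) ^ (((k : ℝ) + 1) / k) +
            (∫ x, |H x| ^ ((n : ℝ) + k + 1) ∂μ) ^ ((1 : ℝ) / k) *
              ((∫ x, v x ^ (2 : ℝ) ∂μ) ^ ((1 : ℝ) / 2)) ^ (2 : ℝ)) := by
  intro v hv
  have hk1 : (1 : ℝ) < k := by exact_mod_cast hk
  have hn2 : (2 : ℝ) ≤ n := by exact_mod_cast hn
  have hQ : 1 < (k : ℝ) * n / ((k : ℝ) * n - ((k : ℝ) + 1)) := by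
    rw [one_lt_div (by nlinarith)]
    linarith
  exact SobolevInequality.rpowNorm_sq_le hyp hGpos hGchain hk1 hQ hA.le
    (integral_nonneg fun x => by positivity) hv
end
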